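/- arXiv:2305.19997 — 5 statements merged into one kernel-verified Lean document; each statement's English description precedes it below -/
import Mathlib

section
/- Let Σ be a d×d real positive definite matrix. Suppose Σ = A Q Aᵀ + Γ where G = {G_1,…,G_K} is a partition of {1,…,d} with assignment matrix A, and this decomposition is feasible; and suppose Σ = Ã Q̃ Ãᵀ + Γ̃ is another decomposition with partition G̃ and assignment matrix Ã that is also feasible. Then G̃ = G (hence Ã = A), Q̃ = Q, and Γ̃ = Γ. -/
open Matrix

/-- Assignment matrix of the partition of `{1,…,d}` given by the assignment map
`g : Fin d → Fin K`: the `(i,k)` entry is `1` if `i` belongs to cluster `k`, else `0`. -/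
def assignMatrix {d K : ℕ} (g : Fin d → Fin K) : Matrix (Fin d) (Fin K) ℝ :=
  fun i k => if g i = k then 1 else 0

/-- Feasibility of a decomposition `S = A Q Aᵀ + Γ` for the partition with assignment
map `g`: `Γ` is diagonal, `Γ i i = 0` whenever the cluster of `i` is a singleton, and
the cluster gap `Δ(S, G)` is positive, i.e. for every pair `i, j` in different clusters
there exists `ℓ ∉ {i,j}` with `S i ℓ ≠ S j ℓ`. -/
def Feasible {d K : ℕ} (S : Matrix (Fin d) (Fin d) ℝ) (g : Fin d → Fin K)
    (Γ : Matrix (Fin d) (Fin d) ℝ) : Prop :=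
  (∀ i j, i ≠ j → Γ i j = 0) ∧
  (∀ i, (∀ j, g j = g i → j = i) → Γ i i = 0) ∧
  (∀ i j, g i ≠ g j → ∃ ℓ, ℓ ≠ i ∧ ℓ ≠ j ∧ S i ℓ ≠ S j ℓ)

lemma assign_entry {d n : ℕ} (h : Fin d → Fin n) (M : Matrix (Fin n) (Fin n) ℝ)
    (i j : Fin d) : (assignMatrix h * M * (assignMatrix h)ᵀ) i j = M (h i) (h j) := by
  simp [assignMatrix, Matrix.mul_apply, Matrix.transpose_apply, ite_mul, mul_ite,
    Finset.sum_ite_eq]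

/-- Identifiability of the block model: two feasible decompositions of a positive
definite matrix `S` must coincide (the partitions agree up to relabeling of clusters,
and `Q`, `Γ` agree). -/
theorem stmt0 {d K K' : ℕ}
    (S : Matrix (Fin d) (Fin d) ℝ) (hSpd : S.PosDef)
    (g : Fin d → Fin K) (hg : Function.Surjective g)
    (Q : Matrix (Fin K) (Fin K) ℝ) (Γ : Matrix (Fin d) (Fin d) ℝ)
    (hdec : S = assignMatrix g * Q * (assignMatrix g)ᵀ + Γ)
    (hfeas : Feasible S g Γ)
    (g' : Fin d → Fin K') (hg' : Function.Surjective g')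
    (Q' : Matrix (Fin K') (Fin K') ℝ) (Γ' : Matrix (Fin d) (Fin d) ℝ)
    (hdec' : S = assignMatrix g' * Q' * (assignMatrix g')ᵀ + Γ')
    (hfeas' : Feasible S g' Γ') :
    ∃ σ : Fin K ≃ Fin K',
      (∀ i, g' i = σ (g i)) ∧ (∀ k k', Q' (σ k) (σ k') = Q k k') ∧ Γ' = Γ := by
  have hS : ∀ i j, S i j = Q (g i) (g j) + Γ i j := by
    intro i j; rw [hdec]; simp [assign_entry, Matrix.add_apply]
  have hS' : ∀ i j, S i j = Q' (g' i) (g' j) + Γ' i j := by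
    intro i j; rw [hdec']; simp [assign_entry, Matrix.add_apply]
  have hoff : ∀ i j, i ≠ j → S i j = Q (g i) (g j) := by
    intro i j hij; rw [hS i j, hfeas.1 i j hij, add_zero]
  have hoff' : ∀ i j, i ≠ j → S i j = Q' (g' i) (g' j) := by
    intro i j hij; rw [hS' i j, hfeas'.1 i j hij, add_zero]
  have hsame : ∀ i j, g i = g j → g' i = g' j := by
    intro i j hij
    by_contra hne
    obtain ⟨ℓ, hℓi, hℓj, hne2⟩ := hfeas'.2.2 i j hne
    exact hne2 (by rw [hoff i ℓ (Ne.symm hℓi), hoff j ℓ (Ne.symm hℓj), hij])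
  have hsame' : ∀ i j, g' i = g' j → g i = g j := by
    intro i j hij
    by_contra hne
    obtain ⟨ℓ, hℓi, hℓj, hne2⟩ := hfeas.2.2 i j hne
    exact hne2 (by rw [hoff' i ℓ (Ne.symm hℓi), hoff' j ℓ (Ne.symm hℓj), hij])
  set s := Function.surjInv hg with hs
  set s' := Function.surjInv hg' with hs'
  have hgs : ∀ k, g (s k) = k := fun k => Function.surjInv_eq hg k
  have hgs' : ∀ k, g' (s' k) = k := fun k => Function.surjInv_eq hg' k
  refine ⟨⟨fun k => g' (s k), fun k' => g (s' k'), ?_, ?_⟩, ?_, ?_, ?_⟩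
  · intro k
    have : g (s' (g' (s k))) = g (s k) := hsame' _ _ (hgs' _)
    simpa [hgs] using this
  · intro k'
    have : g' (s (g (s' k'))) = g' (s' k') := hsame _ _ (hgs _)
    simpa [hgs'] using this
  · intro i
    exact (hsame _ _ (hgs (g i))).symm
  · -- Q part
    have hsingle : ∀ i, (∀ j, g j = g i → j = i) → Q' (g' i) (g' i) = Q (g i) (g i) := by
      intro i hi
      have hi' : ∀ j, g' j = g' i → j = i := fun j hj => hi j (hsame' _ _ hj)
      have h1 := hS i i
      have h2 := hS' i i
      rw [hfeas.2.1 i hi, add_zero] at h1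
      rw [hfeas'.2.1 i hi', add_zero] at h2
      rw [← h1, ← h2]
    have hdiag : ∀ i, Q' (g' i) (g' i) = Q (g i) (g i) := by
      intro i
      by_cases hi : ∀ j, g j = g i → j = i
      · exact hsingle i hi
      · push_neg at hi
        obtain ⟨j, hji, hjne⟩ := hi
        have h1 : S i j = Q (g i) (g i) := by rw [hoff i j (fun h => hjne h.symm), hji]
        have h2 : S i j = Q' (g' i) (g' i) := by
          rw [hoff' i j (fun h => hjne h.symm), hsame j i hji]
        rw [← h1, ← h2]
    intro k k'
    show Q' (g' (s k)) (g' (s k')) = Q k k'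
    by_cases hkk : s k = s k'
    · have hk : k = k' := by rw [← hgs k, ← hgs k', hkk]
      subst hk
      have := hdiag (s k)
      rwa [hgs k] at this
    · rw [← hoff' (s k) (s k') hkk, hoff (s k) (s k') hkk, hgs, hgs]
  · ext i j
    by_cases hij : i = j
    · subst hij
      have h1 := hS i i
      have h2 := hS' i i
      rw [h1] at h2
      by_cases hk : ∀ ℓ, g ℓ = g i → ℓ = i
      · have hk' : ∀ ℓ, g' ℓ = g' i → ℓ = i := fun ℓ hℓ => hk ℓ (hsame' _ _ hℓ)
        rw [hfeas.2.1 i hk, hfeas'.2.1 i hk']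
      · push_neg at hk
        obtain ⟨ℓ, hℓi, hℓne⟩ := hk
        have hQ : Q' (g' i) (g' i) = Q (g i) (g i) := by
          have h3 : S i ℓ = Q (g i) (g i) := by rw [hoff i ℓ (fun h => hℓne h.symm), hℓi]
          have h4 : S i ℓ = Q' (g' i) (g' i) := by
            rw [hoff' i ℓ (fun h => hℓne h.symm), hsame ℓ i hℓi]
          rw [← h3, ← h4]
        rw [hQ] at h2
        linarith
    · rw [hfeas.1 i j hij, hfeas'.1 i j hij]
end

section
/- Let v, v' be random vectors in R^p whose coordinate pairs ([v]_ℓ, [v']_ℓ), ℓ = 1,…,p, are i.i.d. centered bivariate Gaussian with Var([v]_ℓ) = Σ_{ww}, Var([v']_ℓ) = Σ_{w'w'}, and Cov([v]_ℓ, [v']_ℓ) = Σ_{ww'}. Then for every a > 0 and d ≥ 2 such that a√(log d / p) < 12√(Σ_{ww}Σ_{w'w'}), P( |⟨v, v'⟩/p − Σ_{ww'}| ≥ a√(log d / p) ) ≤ 4 exp( −a² log d / (4·432·Σ_{ww}Σ_{w'w'}) ). -/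
/-!
Write the `ℓ`-th summand as `st · X (ρ X + √(1 - ρ²) Y)` with `X, Y` independent standard
normals. Integrating out `Y` and then `X` gives its moment generating function in closed form,
`E exp (λ X (ρ X + β Y)) = (1 - 2λρ - λ²β²)^(-1/2)`, which for `β² = 1 - ρ²` and `|λ| ≤ 1/6` is at
most `exp (λρ + 5λ²)`. The coordinate pairs are independent, so Chernoff's bound on both tails
at `λ = δ / 72`, where `δ = a √(log d / p) / (st) < 12`, bounds the probability by
`2 exp (-67 p δ² / 5184) ≤ 4 exp (-p δ² / 1728)`, and `p δ² = a² log d / (s² t²)`.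
-/

open MeasureTheory ProbabilityTheory Real
open scoped NNReal

theorem integral_exp_mul_sq_gaussianReal {v : ℝ≥0} (hv : v ≠ 0) {c : ℝ} (hc : c * v < 1 / 2) :
    ∫ x, exp (c * x ^ 2) ∂gaussianReal 0 v = (√(1 - 2 * c * v))⁻¹ := by
  have hv' : (0 : ℝ) < v := by positivity
  have hb : 0 < 1 / (2 * v) - c := by
    rw [sub_pos, lt_div_iff₀ (by positivity)]; linarith
  have hpdf (x : ℝ) : gaussianPDFReal 0 v x • exp (c * x ^ 2)
      = (√(2 * π * v))⁻¹ * exp (-(1 / (2 * v) - c) * x ^ 2) := by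
    rw [gaussianPDFReal_def, smul_eq_mul, mul_assoc, ← exp_add]
    congr 2
    field_simp
    ring
  simp_rw [integral_gaussianReal_eq_integral_smul hv, hpdf, integral_const_mul, integral_gaussian,
    ← sqrt_inv, ← sqrt_mul' _ (div_pos pi_pos hb).le]
  congr 1
  field_simp

theorem integrable_exp_mul_sq_gaussianReal {v : ℝ≥0} (hv : v ≠ 0) {c : ℝ} (hc : c * v < 1 / 2) :
    Integrable (fun x ↦ exp (c * x ^ 2)) (gaussianReal 0 v) :=
  .of_integral_ne_zero <| by
    rw [integral_exp_mul_sq_gaussianReal hv hc]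
    exact (inv_pos.2 (sqrt_pos.2 (by linarith))).ne'

theorem exp_mul_mul_add_mul (l ρ β x y : ℝ) :
    exp (l * (x * (ρ * x + β * y))) = exp (l * ρ * x ^ 2) * exp (l * β * x * y) := by
  rw [← exp_add]; congr 1; ring

section Bilinear

variable {l ρ β : ℝ}

theorem integral_exp_mul_mul_add_mul_gaussianReal (x : ℝ) :
    ∫ y, exp (l * (x * (ρ * x + β * y))) ∂gaussianReal 0 1
      = exp ((l * ρ + l ^ 2 * β ^ 2 / 2) * x ^ 2) := by
  have hmgf := congrFun (mgf_id_gaussianReal (μ := 0) (v := 1)) (l * β * x)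
  simp only [mgf, id, NNReal.coe_one, zero_mul, zero_add, one_mul] at hmgf
  simp_rw [exp_mul_mul_add_mul, integral_const_mul, hmgf, ← exp_add]
  congr 1
  ring

theorem integrable_exp_mul_mul_add_mul_prod_gaussianReal (h : 2 * l * ρ + l ^ 2 * β ^ 2 < 1) :
    Integrable (fun z : ℝ × ℝ ↦ exp (l * (z.1 * (ρ * z.1 + β * z.2))))
      ((gaussianReal 0 1).prod (gaussianReal 0 1)) := by
  refine (integrable_prod_iff (by fun_prop)).2 ⟨ae_of_all _ fun x ↦ ?_, ?_⟩
  · simp_rw [exp_mul_mul_add_mul]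
    exact (integrable_exp_mul_gaussianReal _).const_mul _
  · simp_rw [norm_of_nonneg (exp_pos _).le, integral_exp_mul_mul_add_mul_gaussianReal]
    exact integrable_exp_mul_sq_gaussianReal one_ne_zero
      (by rw [NNReal.coe_one, mul_one]; linarith)

theorem integral_exp_mul_mul_add_mul_prod_gaussianReal (h : 2 * l * ρ + l ^ 2 * β ^ 2 < 1) :
    ∫ z : ℝ × ℝ, exp (l * (z.1 * (ρ * z.1 + β * z.2)))
        ∂(gaussianReal 0 1).prod (gaussianReal 0 1)
      = (√(1 - (2 * l * ρ + l ^ 2 * β ^ 2)))⁻¹ := by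
  rw [integral_prod _ (integrable_exp_mul_mul_add_mul_prod_gaussianReal h)]
  simp_rw [integral_exp_mul_mul_add_mul_gaussianReal]
  rw [integral_exp_mul_sq_gaussianReal one_ne_zero (by rw [NNReal.coe_one, mul_one]; linarith),
    NNReal.coe_one]
  ring_nf

end Bilinear

theorem inv_sqrt_one_sub_le_exp {l ρ : ℝ} (hl : |l| ≤ 1 / 6) (hρ : |ρ| ≤ 1) :
    (√(1 - (2 * l * ρ + l ^ 2 * (1 - ρ ^ 2))))⁻¹ ≤ exp (l * ρ + 5 * l ^ 2) := by
  set z := 2 * (l * ρ + 5 * l ^ 2)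
  have hu : |l * ρ| ≤ |l| := by rw [abs_mul]; exact mul_le_of_le_one_right (abs_nonneg l) hρ
  have hl2 : l ^ 2 ≤ 1 / 36 := by nlinarith [sq_abs l, abs_nonneg l]
  have hz : 0 < 1 + z := by nlinarith [neg_abs_le (l * ρ), sq_nonneg l]
  have hpoly : 1 ≤ (1 - (2 * l * ρ + l ^ 2 * (1 - ρ ^ 2))) * (1 + z) := by
    have hu2 : (l * ρ) ^ 2 ≤ l ^ 2 := sq_le_sq.2 hu
    have hu3 : |l * ρ| * (l * ρ) ^ 2 ≤ l ^ 2 / 6 := by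
      nlinarith [sq_nonneg (l * ρ), abs_nonneg (l * ρ)]
    have hul : |l * ρ| * l ^ 2 ≤ l ^ 2 / 6 := by nlinarith [sq_nonneg l, abs_nonneg (l * ρ)]
    nlinarith [neg_abs_le (l * ρ), le_abs_self (l * ρ), sq_nonneg l, sq_nonneg (l * ρ)]
  have hexp : exp (-z) ≤ 1 - (2 * l * ρ + l ^ 2 * (1 - ρ ^ 2)) := by
    refine le_of_mul_le_mul_right ?_ hz
    calc exp (-z) * (1 + z) ≤ exp (-z) * exp z := by gcongr; linarith [add_one_le_exp z]
      _ = 1 := by rw [← exp_add, neg_add_cancel, exp_zero]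
      _ ≤ _ := hpoly
  calc _ ≤ (√(exp (-z)))⁻¹ := by gcongr
    _ = exp (l * ρ + 5 * l ^ 2) := by rw [← exp_half, ← exp_neg]; congr 1; ring

theorem mgf_mul_correlated_le {Ω : Type*} [MeasurableSpace Ω] {P : Measure Ω} {X Y : Ω → ℝ}
    (hX : Measurable X) (hY : Measurable Y)
    (hXY : P.map (fun ω ↦ (X ω, Y ω)) = (gaussianReal 0 1).prod (gaussianReal 0 1))
    {l ρ : ℝ} (hl : |l| ≤ 1 / 6) (hρ : |ρ| ≤ 1) :
    Integrable (fun ω ↦ exp (l * (X ω * (ρ * X ω + √(1 - ρ ^ 2) * Y ω)))) P ∧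
      mgf (fun ω ↦ X ω * (ρ * X ω + √(1 - ρ ^ 2) * Y ω)) P l ≤ exp (l * ρ + 5 * l ^ 2) := by
  have hβ : √(1 - ρ ^ 2) ^ 2 = 1 - ρ ^ 2 := sq_sqrt (by nlinarith [sq_abs ρ, abs_nonneg ρ])
  have hq : 2 * l * ρ + l ^ 2 * √(1 - ρ ^ 2) ^ 2 < 1 := by
    rw [hβ]
    have hl' := abs_le.1 hl
    have hρ' := abs_le.1 hρ
    nlinarith
  have hpair : Measurable fun ω ↦ (X ω, Y ω) := hX.prodMk hY
  have hF : Measurable fun z : ℝ × ℝ ↦ exp (l * (z.1 * (ρ * z.1 + √(1 - ρ ^ 2) * z.2))) := by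
    fun_prop
  refine ⟨?_, ?_⟩
  · have := integrable_exp_mul_mul_add_mul_prod_gaussianReal hq
    rwa [← hXY, integrable_map_measure hF.aestronglyMeasurable hpair.aemeasurable] at this
  · have := integral_exp_mul_mul_add_mul_prod_gaussianReal hq
    rw [← hXY, integral_map hpair.aemeasurable hF.aestronglyMeasurable, hβ] at this
    rw [mgf, this]
    exact inv_sqrt_one_sub_le_exp hl hρ

theorem ProbabilityTheory.iIndepFun.curry {Ω ι κ 𝓧 : Type*} [MeasurableSpace Ω] {P : Measure Ω}
    [MeasurableSpace 𝓧] {X : ι × κ → Ω → 𝓧} (mX : ∀ i, Measurable (X i))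
    (h : iIndepFun X P) : iIndepFun (fun i ω j ↦ X (i, j) ω) P := by
  have := h.isProbabilityMeasure
  have _ i := Measure.isProbabilityMeasure_map (μ := P) (mX i).aemeasurable
  have hrow (i : ι) : P.map (fun ω j ↦ X (i, j) ω) = Measure.infinitePi fun j ↦ P.map (X (i, j)) :=
    (h.precomp (Prod.mk_right_injective i)).map_fun_eq_infinitePi_map₀
      (measurable_pi_lambda _ fun j ↦ mX (i, j)).aemeasurable
  rw [iIndepFun_iff_map_fun_eq_infinitePi_map (fun i ↦ measurable_pi_lambda _ fun j ↦ mX (i, j))]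
  simp_rw [hrow]
  rw [← Measure.infinitePi_map_curry (fun i j ↦ P.map (X (i, j))),
    ← h.map_fun_eq_infinitePi_map₀ (measurable_pi_lambda _ mX).aemeasurable,
    Measure.map_map (by fun_prop) (measurable_pi_lambda _ mX)]
  rfl

section Chernoff

variable {Ω ι : Type*} [MeasurableSpace Ω] {P : Measure Ω} [Fintype ι] {V : ι → Ω → ℝ} {μ c : ℝ}

theorem ProbabilityTheory.iIndepFun.mgf_sum_le {s : ℝ} (hmeas : ∀ i, Measurable (V i))
    (hindep : iIndepFun V P) (hmgf : ∀ i, mgf (V i) P s ≤ exp (s * μ + c * s ^ 2)) :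
    mgf (∑ i, V i) P s ≤ exp (Fintype.card ι * (s * μ + c * s ^ 2)) := by
  rw [hindep.mgf_sum hmeas, exp_nat_mul, ← Finset.card_univ, ← Finset.prod_const]
  exact Finset.prod_le_prod (fun i _ ↦ mgf_nonneg) fun i _ ↦ hmgf i

theorem ProbabilityTheory.iIndepFun.measureReal_abs_sum_sub_ge_le {L t : ℝ}
    (hmeas : ∀ i, Measurable (V i)) (hindep : iIndepFun V P)
    (hmgf : ∀ i s, |s| ≤ L → Integrable (fun ω ↦ exp (s * V i ω)) P ∧
      mgf (V i) P s ≤ exp (s * μ + c * s ^ 2))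
    (ht : 0 ≤ t) (htL : t ≤ L) (δ : ℝ) :
    P.real {ω | Fintype.card ι * δ ≤ |∑ i, V i ω - Fintype.card ι * μ|}
      ≤ 2 * exp (Fintype.card ι * (c * t ^ 2 - t * δ)) := by
  have := hindep.isProbabilityMeasure
  set n : ℝ := (Fintype.card ι : ℝ)
  have hsum (s : ℝ) (hs : |s| ≤ L) :
      Integrable (fun ω ↦ exp (s * (∑ i, V i) ω)) P ∧
        mgf (∑ i, V i) P s ≤ exp (n * (s * μ + c * s ^ 2)) :=
    ⟨hindep.integrable_exp_mul_sum hmeas fun i _ ↦ (hmgf i s hs).1,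
      hindep.mgf_sum_le hmeas fun i ↦ (hmgf i s hs).2⟩
  have hupper : P.real {ω | n * (μ + δ) ≤ (∑ i, V i) ω} ≤ exp (n * (c * t ^ 2 - t * δ)) := by
    have h := hsum t (by rwa [abs_of_nonneg ht])
    refine (measure_ge_le_exp_mul_mgf _ ht h.1).trans ?_
    calc _ ≤ exp (-t * (n * (μ + δ))) * exp (n * (t * μ + c * t ^ 2)) := by gcongr; exact h.2
      _ = _ := by rw [← exp_add]; ring_nf
  have hlower : P.real {ω | (∑ i, V i) ω ≤ n * (μ - δ)} ≤ exp (n * (c * t ^ 2 - t * δ)) := by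
    have h := hsum (-t) (by rwa [abs_neg, abs_of_nonneg ht])
    refine (measure_le_le_exp_mul_mgf _ (neg_nonpos.2 ht) h.1).trans ?_
    calc _ ≤ exp (-(-t) * (n * (μ - δ))) * exp (n * (-t * μ + c * (-t) ^ 2)) := by
          gcongr; exact h.2
      _ = _ := by rw [← exp_add]; ring_nf
  calc _ ≤ P.real ({ω | n * (μ + δ) ≤ (∑ i, V i) ω} ∪ {ω | (∑ i, V i) ω ≤ n * (μ - δ)}) := by
        refine measureReal_mono fun ω hω ↦ ?_
        simp only [Set.mem_ofPred_eq, Set.mem_union, Finset.sum_apply] at hω ⊢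
        rcases le_abs'.1 hω with h | h
        · exact Or.inr (by linarith)
        · exact Or.inl (by linarith)
    _ ≤ _ := (measureReal_union_le _ _).trans (by linarith)

end Chernoff

theorem measureReal_abs_sum_mul_correlated_sub_ge_le {Ω ι : Type*} [MeasurableSpace Ω]
    {P : Measure Ω} [Fintype ι] {Z : ι × Fin 2 → Ω → ℝ} (hmeas : ∀ i, Measurable (Z i))
    (hlaw : ∀ i, P.map (Z i) = gaussianReal 0 1) (hindep : iIndepFun Z P)
    {ρ l : ℝ} (hρ : |ρ| ≤ 1) (hl : 0 ≤ l) (hl' : l ≤ 1 / 6) (δ : ℝ) :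
    P.real {ω | Fintype.card ι * δ ≤
        |∑ i, Z (i, 0) ω * (ρ * Z (i, 0) ω + √(1 - ρ ^ 2) * Z (i, 1) ω) - Fintype.card ι * ρ|}
      ≤ 2 * exp (Fintype.card ι * (5 * l ^ 2 - l * δ)) := by
  have := hindep.isProbabilityMeasure
  have hrow (i : ι) : P.map (fun ω ↦ (Z (i, 0) ω, Z (i, 1) ω))
      = (gaussianReal 0 1).prod (gaussianReal 0 1) := by
    rw [(indepFun_iff_map_prod_eq_prod_map_map (hmeas _).aemeasurable (hmeas _).aemeasurable).1
      (hindep.indepFun (by simp)), hlaw, hlaw]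
  exact ((hindep.curry hmeas).comp (fun _ v ↦ v 0 * (ρ * v 0 + √(1 - ρ ^ 2) * v 1))
    (fun _ ↦ by fun_prop)).measureReal_abs_sum_sub_ge_le (fun i ↦ by fun_prop)
    (fun i s hs ↦ mgf_mul_correlated_le (hmeas (i, 0)) (hmeas (i, 1)) (hrow i) hs hρ) hl hl' δ

theorem le_abs_sum_mul_mul_div_sub_iff {ι : Type*} [Fintype ι] (x y : ι → ℝ) {s t ρ ε n : ℝ}
    (hst : 0 < s * t) (hn : 0 < n) :
    ε ≤ |(∑ i, (s * x i) * (t * y i)) / n - ρ * s * t|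
      ↔ n * (ε / (s * t)) ≤ |∑ i, x i * y i - n * ρ| := by
  have hpos : 0 < s * t / n := div_pos hst hn
  have hscale : (∑ i, (s * x i) * (t * y i)) / n - ρ * s * t
      = s * t / n * (∑ i, x i * y i - n * ρ) := by
    rw [show ∑ i, (s * x i) * (t * y i) = s * t * ∑ i, x i * y i by
      rw [Finset.mul_sum]; exact Finset.sum_congr rfl fun i _ ↦ by ring]
    field_simp
  rw [hscale, abs_mul, abs_of_pos hpos, ← div_le_iff₀' hpos, div_div_eq_mul_div, mul_comm ε,
    mul_div_assoc]

theorem stmt7_general {Ω : Type*} [MeasurableSpace Ω] (P : Measure Ω) [IsProbabilityMeasure P]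
    (p : ℕ) (hp : 0 < p)
    (Z : Fin p × Fin 2 → Ω → ℝ)
    (hmeas : ∀ i, Measurable (Z i))
    (hlaw : ∀ i, Measure.map (Z i) P = gaussianReal 0 1)
    (hindep : iIndepFun Z P)
    (s t ρ : ℝ) (hs : 0 < s) (ht : 0 < t) (hρ : |ρ| ≤ 1)
    (a : ℝ) (ha : 0 < a) (d : ℕ)
    (hcond : a * Real.sqrt (Real.log d / p) < 12 * Real.sqrt (s ^ 2 * t ^ 2)) :
    P {ω | a * Real.sqrt (Real.log d / p) ≤
        |(∑ ℓ : Fin p, (s * Z (ℓ, 0) ω) *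
            (t * (ρ * Z (ℓ, 0) ω + Real.sqrt (1 - ρ ^ 2) * Z (ℓ, 1) ω))) / p
          - ρ * s * t|}
      ≤ ENNReal.ofReal
          (4 * Real.exp (-(a ^ 2 * Real.log d) / (4 * 432 * (s ^ 2 * t ^ 2)))) := by
  have hst : 0 < s * t := mul_pos hs ht
  have hp' : (0 : ℝ) < p := Nat.cast_pos.2 hp
  set δ := a * √(log d / p) / (s * t)
  have hδ12 : δ < 12 := by rwa [div_lt_iff₀ hst, ← sqrt_sq hst.le, mul_pow]
  have hexponent : p * (5 * (δ / 72) ^ 2 - δ / 72 * δ)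
      ≤ -(a ^ 2 * log d) / (4 * 432 * (s ^ 2 * t ^ 2)) := by
    have hpδ : -(a ^ 2 * log d) / (4 * 432 * (s ^ 2 * t ^ 2)) = -(p * δ ^ 2) / 1728 := by
      rw [div_pow, mul_pow, sq_sqrt (div_nonneg (log_natCast_nonneg d) hp'.le)]
      field_simp
      ring
    rw [hpδ]
    nlinarith [mul_nonneg hp'.le (sq_nonneg δ)]
  have hchern := measureReal_abs_sum_mul_correlated_sub_ge_le hmeas hlaw hindep hρ
    (by positivity : 0 ≤ δ / 72) (by linarith) δ
  rw [Fintype.card_fin] at hchern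
  simp_rw [le_abs_sum_mul_mul_div_sub_iff _ _ hst hp']
  rw [← ofReal_measureReal]
  refine ENNReal.ofReal_le_ofReal (hchern.trans ?_)
  linarith [exp_le_exp.2 hexponent, exp_pos (-(a ^ 2 * log d) / (4 * 432 * (s ^ 2 * t ^ 2)))]

/-- Concentration of `⟨v, v'⟩/p` to the covariance `Σ_{ww'}`.  The coordinate pairs
`([v]ₗ, [v']ₗ)` are i.i.d. centered bivariate Gaussian with variances `Σ_{ww} = s²`,
`Σ_{w'w'} = t²` and covariance `Σ_{ww'} = ρst`, realized as `[v]ₗ = s Z₁ₗ`,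
`[v']ₗ = t(ρ Z₁ₗ + √(1−ρ²) Z₂ₗ)` for an i.i.d. array of standard normals.
For `a > 0` and `d ≥ 2` with `a√(log d / p) < 12√(Σ_{ww}Σ_{w'w'})`,
`P(|⟨v,v'⟩/p − Σ_{ww'}| ≥ a√(log d/p)) ≤ 4 exp(−a² log d/(4·432·Σ_{ww}Σ_{w'w'}))`. -/
theorem stmt7 {Ω : Type*} [MeasurableSpace Ω] (P : Measure Ω) [IsProbabilityMeasure P]
    (p : ℕ) (hp : 0 < p)
    (Z : Fin p × Fin 2 → Ω → ℝ)
    (hmeas : ∀ i, Measurable (Z i))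
    (hlaw : ∀ i, Measure.map (Z i) P = gaussianReal 0 1)
    (hindep : iIndepFun Z P)
    (s t ρ : ℝ) (hs : 0 < s) (ht : 0 < t) (hρ : |ρ| ≤ 1)
    (a : ℝ) (ha : 0 < a) (d : ℕ) (hd : 2 ≤ d)
    (hcond : a * Real.sqrt (Real.log d / p) < 12 * Real.sqrt (s ^ 2 * t ^ 2)) :
    P {ω | a * Real.sqrt (Real.log d / p) ≤
        |(∑ ℓ : Fin p, (s * Z (ℓ, 0) ω) *
            (t * (ρ * Z (ℓ, 0) ω + Real.sqrt (1 - ρ ^ 2) * Z (ℓ, 1) ω))) / p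
          - ρ * s * t|}
      ≤ ENNReal.ofReal
          (4 * Real.exp (-(a ^ 2 * Real.log d) / (4 * 432 * (s ^ 2 * t ^ 2)))) :=
  stmt7_general P p hp Z hmeas hlaw hindep s t ρ hs ht hρ a ha d hcond
end

section
/- Let z, r ∈ R^p be nonzero vectors with 1/2 ≤ ‖z‖₂/‖r‖₂ ≤ 2, let β ∈ [35/36, 1), and set z' = √β·z + √(1−β)·r. Then z' ≠ 0 and ‖ z/‖z‖₂ − z'/‖z'‖₂ ‖₂ ≤ (20/3)·√(1−β). -/
lemma unit_diff_le {E : Type*} [NormedAddCommGroup E] [NormedSpace ℝ E]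
    (a b : E) (ha : a ≠ 0) (hb : b ≠ 0) :
    ‖‖a‖⁻¹ • a - ‖b‖⁻¹ • b‖ ≤ 2 * ‖a - b‖ / ‖a‖ := by
  have ha' : 0 < ‖a‖ := norm_pos_iff.mpr ha
  have hb' : 0 < ‖b‖ := norm_pos_iff.mpr hb
  have key : ‖a‖⁻¹ • a - ‖b‖⁻¹ • b = ‖a‖⁻¹ • (a - b) + (‖a‖⁻¹ - ‖b‖⁻¹) • b := by
    rw [smul_sub, sub_smul]; abel
  rw [key]
  have h1 : ‖‖a‖⁻¹ • (a - b) + (‖a‖⁻¹ - ‖b‖⁻¹) • b‖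
      ≤ ‖‖a‖⁻¹ • (a - b)‖ + ‖(‖a‖⁻¹ - ‖b‖⁻¹) • b‖ := norm_add_le _ _
  have h2 : ‖‖a‖⁻¹ • (a - b)‖ = ‖a - b‖ / ‖a‖ := by
    rw [norm_smul, norm_inv, norm_norm]; ring
  have h3 : ‖(‖a‖⁻¹ - ‖b‖⁻¹) • b‖ = |‖a‖⁻¹ - ‖b‖⁻¹| * ‖b‖ := by
    rw [norm_smul, Real.norm_eq_abs]
  have h4 : |‖a‖⁻¹ - ‖b‖⁻¹| * ‖b‖ = |‖b‖ - ‖a‖| / ‖a‖ := by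
    rw [show ‖a‖⁻¹ - ‖b‖⁻¹ = (‖b‖ - ‖a‖) / (‖a‖ * ‖b‖) by field_simp]
    rw [abs_div, abs_of_pos (mul_pos ha' hb')]
    field_simp
  have h5 : |‖b‖ - ‖a‖| ≤ ‖a - b‖ := by
    rw [abs_sub_comm]
    exact abs_norm_sub_norm_le a b
  have h6 : |‖b‖ - ‖a‖| / ‖a‖ ≤ ‖a - b‖ / ‖a‖ := by gcongr
  rw [h2, h3, h4] at h1
  rw [show 2 * ‖a - b‖ / ‖a‖ = ‖a - b‖ / ‖a‖ + ‖a - b‖ / ‖a‖ by ring]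
  linarith

set_option maxHeartbeats 400000 in
/-- Deterministic "slow moving" inequality: for nonzero `z, r ∈ ℝᵖ` with
`1/2 ≤ ‖z‖₂/‖r‖₂ ≤ 2` and `β ∈ [35/36, 1)`, the vector `z' = √β·z + √(1−β)·r` is
nonzero and `‖z/‖z‖₂ − z'/‖z'‖₂‖₂ ≤ (20/3)·√(1−β)`. -/
theorem stmt10 {p : ℕ} (z r : EuclideanSpace ℝ (Fin p))
    (hz : z ≠ 0) (hr : r ≠ 0)
    (h1 : 1 / 2 ≤ ‖z‖ / ‖r‖) (h2 : ‖z‖ / ‖r‖ ≤ 2)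
    (β : ℝ) (hβ1 : 35 / 36 ≤ β) (hβ2 : β < 1) :
    Real.sqrt β • z + Real.sqrt (1 - β) • r ≠ 0 ∧
    ‖‖z‖⁻¹ • z -
        ‖Real.sqrt β • z + Real.sqrt (1 - β) • r‖⁻¹ •
          (Real.sqrt β • z + Real.sqrt (1 - β) • r)‖
      ≤ 20 / 3 * Real.sqrt (1 - β) := by
  have hz' : 0 < ‖z‖ := norm_pos_iff.mpr hz
  have hr' : 0 < ‖r‖ := norm_pos_iff.mpr hr
  have hrz : ‖r‖ ≤ 2 * ‖z‖ := by
    rw [div_le_iff₀ hr'] at h2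
    rw [le_div_iff₀ hr'] at h1
    linarith
  have hβ0 : (0:ℝ) ≤ β := by linarith
  set s := Real.sqrt (1 - β) with hs_def
  have hs0 : 0 ≤ s := Real.sqrt_nonneg _
  have hs2 : s ^ 2 = 1 - β := Real.sq_sqrt (by linarith)
  have hs16 : s ≤ 1 / 6 := by
    have : s ≤ Real.sqrt (1 / 36) := Real.sqrt_le_sqrt (by linarith)
    rwa [show (1/36:ℝ) = (1/6)^2 by norm_num, Real.sqrt_sq (by norm_num)] at this
  have hb2 : Real.sqrt β ^ 2 = β := Real.sq_sqrt hβ0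
  have hbnn : 0 ≤ Real.sqrt β := Real.sqrt_nonneg _
  have hb13 : 1 / 3 < Real.sqrt β := by nlinarith
  have hb1 : Real.sqrt β ≤ 1 := by nlinarith
  set w := Real.sqrt β • z + s • r with hw_def
  -- lower bound on ‖w‖
  have hwlb : (Real.sqrt β - 1 / 3) * ‖z‖ ≤ ‖w‖ := by
    have t1 : ‖Real.sqrt β • z‖ ≤ ‖w‖ + ‖s • r‖ := by
      have : ‖Real.sqrt β • z‖ = ‖w - s • r‖ := by rw [hw_def, add_sub_cancel_right]
      rw [this]; exact norm_sub_le _ _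
    rw [norm_smul, norm_smul, Real.norm_eq_abs, Real.norm_eq_abs,
      abs_of_nonneg hbnn, abs_of_nonneg hs0] at t1
    have t2 : s * ‖r‖ ≤ (1/6) * (2 * ‖z‖) := by
      apply mul_le_mul hs16 hrz (by positivity) (by norm_num)
    nlinarith
  have hw0 : 0 < ‖w‖ := by nlinarith
  have hwne : w ≠ 0 := norm_pos_iff.mp hw0
  refine ⟨hwne, ?_⟩
  -- bound ‖z - w‖
  have hzw : ‖z - w‖ ≤ (13 / 6) * s * ‖z‖ := by
    have e : z - w = (1 - Real.sqrt β) • z - s • r := by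
      rw [hw_def, sub_smul, one_smul]; abel
    rw [e]
    have t : ‖(1 - Real.sqrt β) • z - s • r‖ ≤ ‖(1 - Real.sqrt β) • z‖ + ‖s • r‖ :=
      norm_sub_le _ _
    rw [norm_smul, norm_smul, Real.norm_eq_abs, Real.norm_eq_abs,
      abs_of_nonneg (by linarith : (0:ℝ) ≤ 1 - Real.sqrt β), abs_of_nonneg hs0] at t
    have t1 : 1 - Real.sqrt β ≤ s * (1/6) := by nlinarith
    have t2 : s * ‖r‖ ≤ s * (2 * ‖z‖) := by
      apply mul_le_mul_of_nonneg_left hrz hs0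
    nlinarith
  have main := unit_diff_le z w hz hwne
  have : 2 * ‖z - w‖ / ‖z‖ ≤ 2 * ((13 / 6) * s * ‖z‖) / ‖z‖ := by gcongr
  have hfin : 2 * ((13 / 6) * s * ‖z‖) / ‖z‖ = (13 / 3) * s := by
    field_simp; ring
  calc ‖‖z‖⁻¹ • z - ‖w‖⁻¹ • w‖ ≤ 2 * ‖z - w‖ / ‖z‖ := main
    _ ≤ (13 / 3) * s := by rw [← hfin]; exact this
    _ ≤ 20 / 3 * s := by nlinarith
end

section
/- Let U be a real Gaussian random variable with mean 0 and variance σ² > 0, and let m ≥ 3 be an integer. Then |E[(U² − σ²)^m]| ≤ (2^{2m−1}/3)·σ^{2m}·m!. -/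
open MeasureTheory ProbabilityTheory Real Set
open scoped ENNReal NNReal

/-- odd double factorial: `odf k = 1 * 3 * 5 * ... * (2k-1)` -/
def odf : ℕ → ℕ
  | 0 => 1
  | k+1 => (2*k+1) * odf k

lemma odf_bound : ∀ m, 3 ≤ m → 3 * (1 + odf m) ≤ 2 ^ m * m.factorial := by
  intro m hm
  induction m with
  | zero => omega
  | succ n ih =>
    rcases Nat.lt_or_ge n 3 with h | h
    · interval_cases n
      · omega
      · omega
      · decide
    · have h1 := ih h
      have h2 : 3 * (1 + odf (n+1)) ≤ (2*n+1) * (3 * (1 + odf n)) := by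
        show 3 * (1 + (2*n+1) * odf n) ≤ _
        nlinarith [Nat.zero_le (odf n)]
      calc 3 * (1 + odf (n+1)) ≤ (2*n+1) * (3 * (1 + odf n)) := h2
        _ ≤ (2*n+2) * (2 ^ n * n.factorial) := by
            exact Nat.mul_le_mul (by omega) h1
        _ = 2 ^ (n+1) * (n+1).factorial := by
            rw [Nat.factorial_succ]; ring

lemma JIoi (b : ℝ) (hb : 0 < b) (k : ℕ) :
    ∫ x in Ioi (0:ℝ), x ^ (2*k) * rexp (-b * x^2)
      = b ^ (-(2*(k:ℝ)+1)/2) * (1/2) * Real.Gamma ((2*(k:ℝ)+1)/2) := by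
  have h := integral_rpow_mul_exp_neg_mul_rpow (p := 2) (q := (2*(k:ℝ)))
    (by norm_num) (lt_of_lt_of_le (by norm_num) (by positivity : (0:ℝ) ≤ 2*(k:ℝ))) hb
  have hfun : (fun x : ℝ => x ^ (2*(k:ℝ)) * rexp (-b * x ^ (2:ℝ)))
      = fun x => x ^ (2*k) * rexp (-b * x^2) := by
    funext x
    rw [show (2*(k:ℝ)) = ((2*k:ℕ):ℝ) by push_cast; ring, rpow_natCast,
        show (2:ℝ) = ((2:ℕ):ℝ) by norm_num, rpow_natCast]
  rw [hfun] at h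
  rw [h]

lemma Jline (b : ℝ) (hb : 0 < b) (k : ℕ) :
    ∫ x : ℝ, x ^ (2*k) * rexp (-b * x^2)
      = b ^ (-(2*(k:ℝ)+1)/2) * Real.Gamma ((2*(k:ℝ)+1)/2) := by
  have habs : ∀ x : ℝ, |x| ^ (2*k) * rexp (-b * |x|^2) = x ^ (2*k) * rexp (-b * x^2) := by
    intro x
    rw [(even_two_mul k).pow_abs, sq_abs]
  have hfun : (fun x : ℝ => |x| ^ (2*k) * rexp (-b * |x|^2))
      = fun x => x ^ (2*k) * rexp (-b * x^2) := funext habs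
  calc ∫ x : ℝ, x ^ (2*k) * rexp (-b * x^2)
      = ∫ x : ℝ, |x| ^ (2*k) * rexp (-b * |x|^2) := by rw [hfun]
    _ = 2 * ∫ x in Ioi (0:ℝ), x ^ (2*k) * rexp (-b * x^2) :=
        integral_comp_abs (f := fun x => x ^ (2*k) * rexp (-b * x^2))
    _ = _ := by rw [JIoi b hb k]; ring

lemma Jline_rec (b : ℝ) (hb : 0 < b) (k : ℕ) :
    ∫ x : ℝ, x ^ (2*(k+1)) * rexp (-b * x^2)
      = ((2*(k:ℝ)+1) / (2*b)) * ∫ x : ℝ, x ^ (2*k) * rexp (-b * x^2) := by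
  rw [Jline b hb, Jline b hb]
  have h1 : (2*((k:ℝ)+1)+1)/2 = (2*(k:ℝ)+1)/2 + 1 := by ring
  have hne : (2*(k:ℝ)+1)/2 ≠ 0 := by positivity
  have h2 : Real.Gamma ((2*((k:ℝ)+1)+1)/2) = ((2*(k:ℝ)+1)/2) * Real.Gamma ((2*(k:ℝ)+1)/2) := by
    rw [h1, Real.Gamma_add_one hne]
  have h3 : b ^ (-(2*((k:ℝ)+1)+1)/2) = b ^ (-(2*(k:ℝ)+1)/2) * b⁻¹ := by
    rw [← Real.rpow_neg_one b, ← Real.rpow_add hb]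
    congr 1; ring
  push_cast
  rw [h2, h3]
  field_simp

lemma gaussianPDFReal_eq (v : NNReal) (x : ℝ) :
    gaussianPDFReal 0 v x = (√(2 * π * v))⁻¹ * rexp (-((2*(v:ℝ))⁻¹) * x^2) := by
  rw [gaussianPDFReal_def]
  simp only [sub_zero]
  congr 1
  rw [neg_div]
  congr 1
  ring

lemma integral_gaussianReal_eq {v : NNReal} (hv : v ≠ 0) (g : ℝ → ℝ) :
    ∫ x, g x ∂(gaussianReal 0 v) = ∫ x, gaussianPDFReal 0 v x * g x := by
  rw [gaussianReal_of_var_ne_zero 0 hv]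
  have : gaussianPDF 0 v = fun x => ((gaussianPDFReal 0 v x).toNNReal : ℝ≥0∞) := rfl
  rw [this, integral_withDensity_eq_integral_smul
    (measurable_gaussianPDFReal 0 v).real_toNNReal g]
  congr 1
  funext x
  rw [NNReal.smul_def, smul_eq_mul, Real.coe_toNNReal _ (gaussianPDFReal_nonneg 0 v x)]

lemma integrable_pdf_pow (v : NNReal) (hv : v ≠ 0) (k : ℕ) :
    Integrable (fun x : ℝ => gaussianPDFReal 0 v x * x ^ (2*k)) := by
  have hv' : (0:ℝ) < (v:ℝ) := by positivity
  have hb : (0:ℝ) < (2*(v:ℝ))⁻¹ := by positivity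
  have h := integrable_rpow_mul_exp_neg_mul_sq hb (s := ((2*k:ℕ):ℝ))
    (lt_of_lt_of_le (by norm_num) (by positivity : (0:ℝ) ≤ ((2*k:ℕ):ℝ)))
  have h2 : Integrable (fun x : ℝ => x ^ (2*k) * rexp (-((2*(v:ℝ))⁻¹) * x^2)) := by
    have hfun : (fun x : ℝ => x ^ (((2*k:ℕ)):ℝ) * rexp (-((2*(v:ℝ))⁻¹) * x^2))
        = fun x => x ^ (2*k) * rexp (-((2*(v:ℝ))⁻¹) * x^2) := by
      funext x; rw [rpow_natCast]
    rwa [hfun] at h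
  have := h2.const_mul ((√(2 * π * v))⁻¹)
  refine this.congr (Filter.Eventually.of_forall fun x => ?_)
  simp only [gaussianPDFReal_eq]
  ring

lemma integrable_pow_gaussianReal {v : NNReal} (hv : v ≠ 0) (k : ℕ) :
    Integrable (fun x : ℝ => x ^ (2*k)) (gaussianReal 0 v) := by
  rw [gaussianReal_of_var_ne_zero 0 hv]
  rw [integrable_withDensity_iff (measurable_gaussianPDF 0 v)
    (Filter.Eventually.of_forall fun x => ENNReal.ofReal_lt_top)]
  refine (integrable_pdf_pow v hv k).congr (Filter.Eventually.of_forall fun x => ?_)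
  simp only [gaussianPDF_def, ENNReal.toReal_ofReal (gaussianPDFReal_nonneg 0 v x)]
  ring

lemma moment_gaussianReal {v : NNReal} (hv : v ≠ 0) (k : ℕ) :
    ∫ x, x ^ (2*k) ∂(gaussianReal 0 v) = (v:ℝ)^k * (odf k : ℝ) := by
  have hv' : (0:ℝ) < (v:ℝ) := by positivity
  have hb : (0:ℝ) < (2*(v:ℝ))⁻¹ := by positivity
  set C : ℝ := (√(2 * π * v))⁻¹ with hC
  have key : ∀ j : ℕ, ∫ x, x ^ (2*j) ∂(gaussianReal 0 v)
      = C * ∫ x : ℝ, x ^ (2*j) * rexp (-((2*(v:ℝ))⁻¹) * x^2) := by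
    intro j
    rw [integral_gaussianReal_eq hv]
    rw [← integral_const_mul]
    congr 1
    funext x
    rw [gaussianPDFReal_eq]
    ring
  induction k with
  | zero =>
    simp only [Nat.mul_zero, pow_zero, odf]
    rw [integral_const]
    simp
  | succ n ih =>
    calc ∫ x, x ^ (2*(n+1)) ∂(gaussianReal 0 v)
        = ((2*(n:ℝ)+1) / (2*((2*(v:ℝ))⁻¹)))
            * (C * ∫ x : ℝ, x ^ (2*n) * rexp (-((2*(v:ℝ))⁻¹) * x^2)) := by
          rw [key (n+1), Jline_rec _ hb n]; ring
      _ = ((2*(n:ℝ)+1) * (v:ℝ)) * ((v:ℝ)^n * (odf n : ℝ)) := by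
          rw [← key n, ih]
          congr 1
          field_simp
      _ = (v:ℝ)^(n+1) * (odf (n+1) : ℝ) := by
          show _ = (v:ℝ)^(n+1) * (((2*n+1) * odf n : ℕ) : ℝ)
          push_cast; ring

lemma pointwise_bound (v : ℝ) (hv : 0 ≤ v) (m : ℕ) (x : ℝ) :
    |x ^ 2 - v| ^ m ≤ x ^ (2*m) + v ^ m := by
  have hx : (0:ℝ) ≤ x^2 := sq_nonneg x
  rcases le_total v (x^2) with h | h
  · have h1 : |x^2 - v| ≤ x^2 := by
      rw [abs_of_nonneg (by linarith)]; linarith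
    calc |x^2 - v| ^ m ≤ (x^2) ^ m := pow_le_pow_left₀ (abs_nonneg _) h1 m
      _ = x ^ (2*m) := (pow_mul x 2 m).symm
      _ ≤ x ^ (2*m) + v ^ m := by nlinarith [pow_nonneg hv m]
  · have h1 : |x^2 - v| ≤ v := by
      rw [abs_of_nonpos (by linarith)]; linarith
    calc |x^2 - v| ^ m ≤ v ^ m := pow_le_pow_left₀ (abs_nonneg _) h1 m
      _ ≤ x ^ (2*m) + v ^ m := by
          have : (0:ℝ) ≤ x ^ (2*m) := by rw [pow_mul]; positivity
          linarith

/-- Centered moment bound for a Gaussian variable `U` with mean 0 and variance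
`σ² = v > 0`: for every integer `m ≥ 3`, `|E[(U² − σ²)^m]| ≤ (2^{2m−1}/3)·σ^{2m}·m!`. -/
theorem stmt18 {Ω : Type*} [MeasurableSpace Ω] (P : Measure Ω) [IsProbabilityMeasure P]
    (U : Ω → ℝ) (hU : Measurable U)
    (v : NNReal) (hv : 0 < v)
    (hlaw : Measure.map U P = gaussianReal 0 v)
    (m : ℕ) (hm : 3 ≤ m) :
    |∫ ω, (U ω ^ 2 - (v : ℝ)) ^ m ∂P|
      ≤ (2 : ℝ) ^ (2 * m - 1) / 3 * (v : ℝ) ^ m * (Nat.factorial m : ℝ) := by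
  have hv' : (0:ℝ) < (v:ℝ) := hv
  have hvne : v ≠ 0 := hv.ne'
  -- step 1: transfer to the law
  have hmeas : AEStronglyMeasurable (fun x : ℝ => (x ^ 2 - (v:ℝ)) ^ m)
      (Measure.map U P) := (Continuous.aestronglyMeasurable (by continuity))
  have h1 : ∫ ω, (U ω ^ 2 - (v : ℝ)) ^ m ∂P
      = ∫ x, (x ^ 2 - (v:ℝ)) ^ m ∂(gaussianReal 0 v) := by
    rw [← hlaw, integral_map hU.aemeasurable hmeas]
  rw [h1]
  -- step 2: |∫ f| ≤ ∫ |f| ≤ ∫ (x^(2m) + v^m)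
  have hint : Integrable (fun x : ℝ => x ^ (2*m) + (v:ℝ)^m) (gaussianReal 0 v) :=
    (integrable_pow_gaussianReal hvne m).add (integrable_const _)
  have h2 : |∫ x, (x ^ 2 - (v:ℝ)) ^ m ∂(gaussianReal 0 v)|
      ≤ ∫ x, (x ^ (2*m) + (v:ℝ)^m) ∂(gaussianReal 0 v) := by
    have hn := norm_integral_le_integral_norm (μ := gaussianReal 0 v)
      (fun x : ℝ => (x ^ 2 - (v:ℝ)) ^ m)
    simp only [Real.norm_eq_abs] at hn
    refine hn.trans ?_
    refine integral_mono_of_nonneg (Filter.Eventually.of_forall fun x => abs_nonneg _)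
      hint (Filter.Eventually.of_forall fun x => ?_)
    simp only [abs_pow]
    exact pointwise_bound (v:ℝ) hv'.le m x
  -- step 3: compute the integral
  have h3 : ∫ x, (x ^ (2*m) + (v:ℝ)^m) ∂(gaussianReal 0 v)
      = (v:ℝ)^m * (1 + (odf m : ℝ)) := by
    rw [integral_add (integrable_pow_gaussianReal hvne m) (integrable_const _),
      moment_gaussianReal hvne m, integral_const]
    simp [measure_univ]
    ring
  rw [h3] at h2
  refine h2.trans ?_
  -- step 4: arithmetic
  have hb := odf_bound m hm
  have hb' : (3:ℝ) * (1 + (odf m : ℝ)) ≤ 2^m * (m.factorial : ℝ) := by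
    exact_mod_cast Nat.cast_le.mpr hb
  have hpow : (2:ℝ)^m ≤ (2:ℝ)^(2*m-1) :=
    pow_le_pow_right₀ one_le_two (by omega)
  have hfac : (0:ℝ) ≤ (m.factorial : ℝ) := by positivity
  have hvm : (0:ℝ) ≤ (v:ℝ)^m := by positivity
  calc (v:ℝ)^m * (1 + (odf m : ℝ))
      ≤ (v:ℝ)^m * (2^m * (m.factorial : ℝ) / 3) := by
        apply mul_le_mul_of_nonneg_left _ hvm
        linarith
    _ ≤ (v:ℝ)^m * (2^(2*m-1) * (m.factorial : ℝ) / 3) := by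
        apply mul_le_mul_of_nonneg_left _ hvm
        have := mul_le_mul_of_nonneg_right hpow hfac
        linarith
    _ = (2 : ℝ) ^ (2 * m - 1) / 3 * (v : ℝ) ^ m * (Nat.factorial m : ℝ) := by ring
end

section
/- Let Σ and S be d×d real symmetric matrices, G = {G_1,…,G_K} a partition of {1,…,d} with assignment map g, and suppose Σ has the block property Σ_{wc} = Q_{g(w)g(c)} for all w ≠ c, for some K×K matrix Q. Assume the separation condition: for every pair w ≠ w' with g(w) ≠ g(w'), max over c ∉ {w,w'} of |Σ_{wc} − Σ_{w'c}| ≥ η > 0. Define d̂(w,w') = max over c ∉ {w,w'} of |S_{wc} − S_{w'c}|. If α ≤ η/2 and 4‖S − Σ‖_max < α, then for all w ≠ w': d̂(w,w') < α if g(w) = g(w'), and d̂(w,w') > α if g(w) ≠ g(w'). -/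
/-- Separation dichotomy for the COD clustering distance: if `Σ` has the block
property `Σ_{wc} = Q_{g(w)g(c)}` for `w ≠ c` and clusters are `η`-separated
(every cross-cluster pair `w, w'` admits `c ∉ {w,w'}` with `|Σ_{wc} − Σ_{w'c}| ≥ η`),
then for `α ≤ η/2` and `4‖S − Σ‖_max < α`, the empirical distance
`d̂(w,w') = max_{c ∉ {w,w'}} |S_{wc} − S_{w'c}|` satisfies `d̂(w,w') < α` within
clusters and `d̂(w,w') > α` across clusters. -/
theorem stmt19 {d K : ℕ} (Sig S : Matrix (Fin d) (Fin d) ℝ)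
    (hSig : Sig.IsSymm) (hS : S.IsSymm)
    (g : Fin d → Fin K) (Q : Matrix (Fin K) (Fin K) ℝ)
    (hblock : ∀ w c, w ≠ c → Sig w c = Q (g w) (g c))
    (η : ℝ) (hη : 0 < η)
    (hsep : ∀ w w', g w ≠ g w' → ∃ c, c ≠ w ∧ c ≠ w' ∧ η ≤ |Sig w c - Sig w' c|)
    (α : ℝ) (hα : α ≤ η / 2)
    (herr : 4 * (⨆ i, ⨆ j, |S i j - Sig i j|) < α) :
    ∀ w w', w ≠ w' →
      ((g w = g w' → ∀ c, c ≠ w → c ≠ w' → |S w c - S w' c| < α) ∧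
       (g w ≠ g w' → ∃ c, c ≠ w ∧ c ≠ w' ∧ α < |S w c - S w' c|)) := by
  intro w w' hww'
  set ε : ℝ := ⨆ i, ⨆ j, |S i j - Sig i j| with hε
  have hle : ∀ i j, |S i j - Sig i j| ≤ ε := by
    intro i j
    calc |S i j - Sig i j| ≤ ⨆ j, |S i j - Sig i j| :=
          le_ciSup (f := fun j => |S i j - Sig i j|)
          (Set.Finite.bddAbove (Set.finite_range _)) j
      _ ≤ ε := le_ciSup (f := fun i => ⨆ j, |S i j - Sig i j|)
          (Set.Finite.bddAbove (Set.finite_range _)) i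
  have hε0 : 0 ≤ ε := le_trans (abs_nonneg _) (hle w w)
  constructor
  · intro hg c hcw hcw'
    have h1 : Sig w c = Sig w' c := by
      rw [hblock w c (Ne.symm hcw), hblock w' c (Ne.symm hcw'), hg]
    have := abs_sub_abs_le_abs_sub (S w c - Sig w c) (S w' c - Sig w' c)
    have h2 : |S w c - S w' c| ≤ |S w c - Sig w c| + |S w' c - Sig w' c| := by
      have : S w c - S w' c = (S w c - Sig w c) - (S w' c - Sig w' c) := by
        rw [h1]; ring
      rw [this]; exact abs_sub _ _
    have := hle w c
    have := hle w' c
    linarith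
  · intro hg
    obtain ⟨c, hcw, hcw', hc⟩ := hsep w w' hg
    refine ⟨c, hcw, hcw', ?_⟩
    have h2 : |Sig w c - Sig w' c| ≤ |S w c - S w' c| + |S w c - Sig w c| + |S w' c - Sig w' c| := by
      have e : Sig w c - Sig w' c =
          (S w c - S w' c) - (S w c - Sig w c) + (S w' c - Sig w' c) := by ring
      calc |Sig w c - Sig w' c| ≤ |(S w c - S w' c) - (S w c - Sig w c)| + |S w' c - Sig w' c| := by
            rw [e]; exact abs_add_le _ _
        _ ≤ |S w c - S w' c| + |S w c - Sig w c| + |S w' c - Sig w' c| := by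
            have := abs_sub (S w c - S w' c) (S w c - Sig w c)
            linarith
    have := hle w c
    have := hle w' c
    linarith
end
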